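/- Let T* ∈ (0,∞), N > 0, let β : [0,T*] → (0,∞) be continuous, and let M : [0,T*) → ℝ be locally Lipschitz with |M'(t) + (β(t)/2) M(t)²| ≤ β(t) N for almost every t ∈ (0,T*), and suppose liminf_{t→T*} M(t) = −∞. Then lim_{t→T*} ( M(t) · ∫_t^{T*} β(s) ds ) = −2. -/

import Mathlib

/-!
Below the level `-√(2N)` the differential inequality forces `M' < 0`, so once `M` gets there it
can never climb back; since `liminf M = -∞` this happens arbitrarily close to `T*`, hence
`M → -∞`. Near `T*` the function `1/M` is then Lipschitz with
`(1/M)' = -M'/M² = β/2 + O(β N / M²)`, and integrating over `[t, T*)`, where `1/M → 0`, gives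
`-1/M(t) = (1/2 + o(1)) ∫ₜ^{T*} β`.
-/

open MeasureTheory Filter Set Topology
open scoped NNReal

namespace AbsolutelyContinuousOnInterval

variable {f φ ψ : ℝ → ℝ} {a b : ℝ}

theorem sub_le_integral_of_ae_deriv_le (hab : a ≤ b) (hf : AbsolutelyContinuousOnInterval f a b)
    (hψ : IntervalIntegrable ψ volume a b) (h : ∀ᵐ t, t ∈ Ioo a b → deriv f t ≤ ψ t) :
    f b - f a ≤ ∫ t in a..b, ψ t := by
  rw [← hf.integral_deriv_eq_sub]
  refine intervalIntegral.integral_mono_ae_restrict hab hf.intervalIntegrable_deriv hψ ?_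
  rw [EventuallyLE, ← Measure.restrict_congr_set Ioo_ae_eq_Icc]
  exact (ae_restrict_iff' measurableSet_Ioo).2 h

theorem integral_le_sub_of_ae_le_deriv (hab : a ≤ b) (hf : AbsolutelyContinuousOnInterval f a b)
    (hφ : IntervalIntegrable φ volume a b) (h : ∀ᵐ t, t ∈ Ioo a b → φ t ≤ deriv f t) :
    ∫ t in a..b, φ t ≤ f b - f a := by
  rw [← hf.integral_deriv_eq_sub]
  refine intervalIntegral.integral_mono_ae_restrict hab hφ hf.intervalIntegrable_deriv ?_
  rw [EventuallyLE, ← Measure.restrict_congr_set Ioo_ae_eq_Icc]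
  exact (ae_restrict_iff' measurableSet_Ioo).2 h

theorem le_of_ae_deriv_nonpos_of_lt {c K : ℝ} (hab : a ≤ b)
    (hf : AbsolutelyContinuousOnInterval f a b)
    (hderiv : ∀ᵐ t, t ∈ Ioo a b → f t < c → deriv f t ≤ 0) (hKc : K < c) (ha : f a ≤ K) :
    f b ≤ K := by
  have hcont : ContinuousOn f (Icc a b) := uIcc_of_le hab ▸ hf.continuousOn
  -- Real induction: to the right of a point where `f ≤ K`, `f` stays below `c` for a while and
  -- is therefore nonincreasing there.
  suffices Icc a b ⊆ {t | f t ≤ K} from this (right_mem_Icc.2 hab)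
  refine IsClosed.Icc_subset_of_forall_mem_nhdsWithin ?_ ha ?_
  · rw [inter_comm]
    exact hcont.preimage_isClosed_of_isClosed isClosed_Icc isClosed_Iic
  rintro x ⟨hxK, hax, hxb⟩
  have hbelow : ∀ᶠ t in 𝓝[≥] x, f t < c := by
    rw [← nhdsWithin_Icc_eq_nhdsGE hxb]
    exact ((hcont.mono (Icc_subset_Icc_left hax)) x (left_mem_Icc.2 hxb.le)).eventually
      (gt_mem_nhds (hxK.trans_lt hKc))
  obtain ⟨u, hxu, hu⟩ := mem_nhdsGE_iff_exists_Icc_subset.1 hbelow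
  refine mem_nhdsGT_iff_exists_Ioc_subset.2 ⟨min u b, lt_min hxu hxb, fun v hv => ?_⟩
  have hvu : v ≤ u := hv.2.trans (min_le_left _ _)
  have hvb : v ≤ b := hv.2.trans (min_le_right _ _)
  have hsub : uIcc x v ⊆ uIcc a b := by
    rw [uIcc_of_le hv.1.le, uIcc_of_le hab]
    exact Icc_subset_Icc hax hvb
  have hderiv' : ∀ᵐ t, t ∈ Ioo x v → deriv f t ≤ 0 := hderiv.mono fun t ht htv =>
    ht ⟨hax.trans_lt htv.1, htv.2.trans_le hvb⟩ (hu ⟨htv.1.le, htv.2.le.trans hvu⟩)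
  have hmono := (hf.mono hsub).sub_le_integral_of_ae_deriv_le hv.1.le
    intervalIntegrable_const hderiv'
  rw [intervalIntegral.integral_zero, sub_nonpos] at hmono
  exact hmono.trans hxK

end AbsolutelyContinuousOnInterval

theorem lipschitzOnWith_inv_of_le_norm {𝕜 : Type*} [NormedDivisionRing 𝕜] {K : ℝ≥0}
    (hK : 0 < K) : LipschitzOnWith (K ^ 2)⁻¹ (fun x : 𝕜 => x⁻¹) {x | (K : ℝ) ≤ ‖x‖} := by
  refine LipschitzOnWith.of_dist_le_mul fun x hx y hy => ?_
  have hK' : (0 : ℝ) < K := hK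
  have hx0 : x ≠ 0 := norm_pos_iff.1 (hK'.trans_le hx)
  have hy0 : y ≠ 0 := norm_pos_iff.1 (hK'.trans_le hy)
  rw [dist_eq_norm, inv_sub_inv' hx0 hy0, norm_mul, norm_mul, norm_inv, norm_inv, dist_eq_norm,
    norm_sub_rev]
  calc ‖x‖⁻¹ * ‖x - y‖ * ‖y‖⁻¹ ≤ (K : ℝ)⁻¹ * ‖x - y‖ * (K : ℝ)⁻¹ := by
        gcongr
        exacts [hx, hy]
    _ = ((K ^ 2)⁻¹ : ℝ≥0) * ‖x - y‖ := by push_cast; ring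

section Riccati

variable {M β : ℝ → ℝ} {N K a b : ℝ}

theorem le_of_le_of_riccati (hab : a ≤ b) (hM : AbsolutelyContinuousOnInterval M a b)
    (hβ : ∀ t ∈ Ioo a b, 0 < β t)
    (hineq : ∀ᵐ t, t ∈ Ioo a b → deriv M t + β t / 2 * M t ^ 2 ≤ β t * N)
    (hK : K < -√(2 * N)) (ha : M a ≤ K) : M b ≤ K := by
  refine hM.le_of_ae_deriv_nonpos_of_lt hab ?_ hK ha
  filter_upwards [hineq] with t ht hmem hMt
  have h2N : 2 * N < M t ^ 2 := by
    simpa using Real.lt_sq_of_sqrt_lt (x := 2 * N) (y := -M t) (by linarith)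
  nlinarith [ht hmem, hβ t hmem]

theorem tendsto_atBot_of_liminf_eq_bot {T c : ℝ} (haT : a < T)
    (hblow : liminf (fun t => (M t : EReal)) (𝓝[<] T) = ⊥)
    (htrap : ∀ K < c, ∀ t₀ ∈ Ioo a T, M t₀ ≤ K → ∀ t ∈ Ico t₀ T, M t ≤ K) :
    Tendsto M (𝓝[<] T) atBot := by
  refine tendsto_atBot.2 fun C => ?_
  have hfreq : ∃ᶠ t in 𝓝[<] T, (M t : EReal) < (min C (c - 1) : ℝ) :=
    frequently_lt_of_liminf_lt (h := hblow ▸ EReal.bot_lt_coe _)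
  obtain ⟨t₀, hMt₀, ht₀⟩ := (hfreq.and_eventually (Ioo_mem_nhdsLT haT)).exists
  filter_upwards [Ioo_mem_nhdsLT ht₀.2] with t ht
  exact (htrap _ ((min_le_right _ _).trans_lt (by linarith)) t₀ ht₀
    (EReal.coe_lt_coe_iff.1 hMt₀).le t ⟨ht.1.le, ht.2⟩).trans (min_le_left _ _)

theorem abs_deriv_inv_sub_half_le {t : ℝ} (hK : 0 < K) (hMt : M t ≤ -K)
    (hd : DifferentiableAt ℝ M t) (h : |deriv M t + β t / 2 * M t ^ 2| ≤ β t * N) :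
    |deriv (fun s => (M s)⁻¹) t - β t / 2| ≤ N / K ^ 2 * β t := by
  have hM0 : M t ≠ 0 := by linarith
  have hK2 : K ^ 2 ≤ M t ^ 2 := by nlinarith
  have hM2 : 0 < M t ^ 2 := (pow_pos hK 2).trans_le hK2
  have hβN : 0 ≤ β t * N := (abs_nonneg _).trans h
  rw [deriv_fun_inv'' hd hM0,
    show -deriv M t / M t ^ 2 - β t / 2 = -((deriv M t + β t / 2 * M t ^ 2) / M t ^ 2) by
      field_simp; ring,
    abs_neg, abs_div, abs_of_pos hM2]
  calc _ ≤ β t * N / M t ^ 2 := by gcongr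
    _ ≤ β t * N / K ^ 2 := by gcongr
    _ = N / K ^ 2 * β t := by ring

theorem abs_inv_sub_inv_sub_half_integral_le {L : ℝ≥0} (hab : a ≤ b)
    (hM : LipschitzOnWith L M (Icc a b)) (hβ : IntervalIntegrable β volume a b) (hK : 0 < K)
    (hMK : ∀ t ∈ Icc a b, M t ≤ -K)
    (hineq : ∀ᵐ t, t ∈ Ioo a b →
      DifferentiableAt ℝ M t ∧ |deriv M t + β t / 2 * M t ^ 2| ≤ β t * N) :
    |(M b)⁻¹ - (M a)⁻¹ - (∫ t in a..b, β t) / 2| ≤ N / K ^ 2 * ∫ t in a..b, β t := by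
  have hinv : AbsolutelyContinuousOnInterval (fun t => (M t)⁻¹) a b := by
    have hmaps : MapsTo M (Icc a b) {x : ℝ | (K.toNNReal : ℝ) ≤ ‖x‖} := fun t ht => by
      show (K.toNNReal : ℝ) ≤ ‖M t‖
      rw [Real.coe_toNNReal _ hK.le, Real.norm_eq_abs]
      linarith [hMK t ht, neg_le_abs (M t)]
    have hlip := (lipschitzOnWith_inv_of_le_norm (Real.toNNReal_pos.2 hK)).comp hM hmaps
    exact (uIcc_of_le hab ▸ hlip).absolutelyContinuousOnInterval
  have hderiv : ∀ᵐ t, t ∈ Ioo a b →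
      |deriv (fun s => (M s)⁻¹) t - β t / 2| ≤ N / K ^ 2 * β t := by
    filter_upwards [hineq] with t ht hmem
    exact abs_deriv_inv_sub_half_le hK (hMK t (Ioo_subset_Icc_self hmem)) (ht hmem).1 (ht hmem).2
  have hlo := hinv.integral_le_sub_of_ae_le_deriv hab
    (hβ.const_mul (1 / 2 - N / K ^ 2)) (by
      filter_upwards [hderiv] with t ht hmem
      linarith [(abs_le.1 (ht hmem)).1])
  have hhi := hinv.sub_le_integral_of_ae_deriv_le hab
    (hβ.const_mul (1 / 2 + N / K ^ 2)) (by
      filter_upwards [hderiv] with t ht hmem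
      linarith [(abs_le.1 (ht hmem)).2])
  rw [intervalIntegral.integral_const_mul] at hlo hhi
  rw [abs_le]
  constructor <;> linarith

theorem abs_inv_add_half_integral_le {T : ℝ} (haT : a < T)
    (hM : ∀ b < T, ∃ L : ℝ≥0, LipschitzOnWith L M (Icc a b))
    (hβ : IntervalIntegrable β volume a T) (hK : 0 < K) (hMK : ∀ t ∈ Ico a T, M t ≤ -K)
    (hMbot : Tendsto M (𝓝[<] T) atBot)
    (hineq : ∀ᵐ t, t ∈ Ioo a T →
      DifferentiableAt ℝ M t ∧ |deriv M t + β t / 2 * M t ^ 2| ≤ β t * N) :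
    |(M a)⁻¹ + (∫ t in a..T, β t) / 2| ≤ N / K ^ 2 * ∫ t in a..T, β t := by
  have hI : Tendsto (fun b => ∫ t in a..b, β t) (𝓝[<] T) (𝓝 (∫ t in a..T, β t)) := by
    rw [← nhdsWithin_Ioo_eq_nhdsLT haT]
    exact (intervalIntegral.continuousOn_primitive_interval' hβ left_mem_uIcc T
      right_mem_uIcc).mono (uIcc_of_le haT.le ▸ Ioo_subset_Icc_self)
  have hlim := ((((tendsto_inv_atBot_zero.comp hMbot).sub_const (M a)⁻¹).sub
    (hI.div_const 2)).abs).sub (hI.const_mul (N / K ^ 2))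
  have hbound : ∀ᶠ b in 𝓝[<] T,
      |(M b)⁻¹ - (M a)⁻¹ - (∫ t in a..b, β t) / 2| - N / K ^ 2 * ∫ t in a..b, β t ≤ 0 := by
    filter_upwards [Ioo_mem_nhdsLT haT] with b hb
    obtain ⟨L, hL⟩ := hM b hb.2
    have hsub : uIcc a b ⊆ uIcc a T := by
      rw [uIcc_of_le hb.1.le, uIcc_of_le haT.le]
      exact Icc_subset_Icc_right hb.2.le
    exact sub_nonpos.2 (abs_inv_sub_inv_sub_half_integral_le hb.1.le hL (hβ.mono_set hsub) hK
      (fun t ht => hMK t ⟨ht.1, ht.2.trans_lt hb.2⟩)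
      (hineq.mono fun t ht hmem => ht ⟨hmem.1, hmem.2.trans hb.2⟩))
  have hle := le_of_tendsto hlim hbound
  rwa [zero_sub, ← neg_add', abs_neg, sub_nonpos] at hle

theorem abs_inv_div_integral_add_half_le {T : ℝ} (haT : a < T)
    (hM : ∀ b < T, ∃ L : ℝ≥0, LipschitzOnWith L M (Icc a b))
    (hβ : IntervalIntegrable β volume a T) (hβpos : ∀ t ∈ Ioo a T, 0 < β t) (hK : 0 < K)
    (hMK : ∀ t ∈ Ico a T, M t ≤ -K) (hMbot : Tendsto M (𝓝[<] T) atBot)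
    (hineq : ∀ᵐ t, t ∈ Ioo a T →
      DifferentiableAt ℝ M t ∧ |deriv M t + β t / 2 * M t ^ 2| ≤ β t * N) :
    |(M a)⁻¹ / (∫ t in a..T, β t) - (-1 / 2)| ≤ N / K ^ 2 := by
  have hB : 0 < ∫ t in a..T, β t := intervalIntegral.intervalIntegral_pos_of_pos_on hβ hβpos haT
  have hsplit : (M a)⁻¹ / (∫ t in a..T, β t) - (-1 / 2)
      = ((M a)⁻¹ + (∫ t in a..T, β t) / 2) / ∫ t in a..T, β t := by
    field_simp
    ring
  rw [hsplit, abs_div, abs_of_pos hB, div_le_iff₀ hB]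
  exact abs_inv_add_half_integral_le haT hM hβ hK hMK hMbot hineq

end Riccati

theorem blow_up_rate_general
    (Tstar N : ℝ) (hT : 0 < Tstar)
    (β M : ℝ → ℝ)
    (hβc : ContinuousOn β (Set.Icc 0 Tstar))
    (hβpos : ∀ t ∈ Set.Icc (0 : ℝ) Tstar, 0 < β t)
    (hMlip : ∀ a b : ℝ, 0 ≤ a → b < Tstar →
      ∃ L : NNReal, LipschitzOnWith L M (Set.Icc a b))
    (hineq : ∀ᵐ (t : ℝ) ∂volume, t ∈ Set.Ioo 0 Tstar →
      DifferentiableAt ℝ M t ∧ |deriv M t + β t / 2 * (M t) ^ 2| ≤ β t * N)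
    (hblow : Filter.liminf (fun t => (M t : EReal))
      (nhdsWithin Tstar (Set.Iio Tstar)) = ⊥) :
    Tendsto (fun t => M t * ∫ s in t..Tstar, β s)
      (nhdsWithin Tstar (Set.Iio Tstar)) (nhds (-2)) := by
  have hMbot : Tendsto M (𝓝[<] Tstar) atBot := by
    refine tendsto_atBot_of_liminf_eq_bot (c := -√(2 * N)) hT hblow
      fun K hK t₀ ht₀ hMt₀ t ht => ?_
    obtain ⟨L, hL⟩ := hMlip t₀ t ht₀.1.le ht.2
    exact le_of_le_of_riccati ht.1 (uIcc_of_le ht.1 ▸ hL).absolutelyContinuousOnInterval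
      (fun s hs => hβpos s ⟨ht₀.1.le.trans hs.1.le, hs.2.le.trans ht.2.le⟩)
      (hineq.mono fun s hs hmem =>
        (le_abs_self _).trans (hs ⟨ht₀.1.trans hmem.1, hmem.2.trans ht.2⟩).2) hK hMt₀
  have hrate : Tendsto (fun t => (M t)⁻¹ / ∫ s in t..Tstar, β s) (𝓝[<] Tstar) (𝓝 (-1 / 2)) := by
    refine Metric.tendsto_nhds.2 fun ε hε => ?_
    have hsmall : ∀ᶠ K : ℝ in atTop, N / K ^ 2 < ε ∧ 0 < K :=
      ((tendsto_const_nhds.div_atTop (tendsto_pow_atTop two_ne_zero)).eventually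
        (gt_mem_nhds hε)).and (eventually_gt_atTop 0)
    obtain ⟨K, hKε, hK⟩ := hsmall.exists
    obtain ⟨t₀, ht₀, hMK⟩ := mem_nhdsLT_iff_exists_Ioo_subset.1
      (hMbot.eventually (eventually_le_atBot (-K)))
    filter_upwards [Ioo_mem_nhdsLT (max_lt ht₀ hT)] with t ht
    have ht0 : 0 < t := (le_max_right _ _).trans_lt ht.1
    refine (abs_inv_div_integral_add_half_le ht.2 (fun b hb => hMlip t b ht0.le hb)
      ((hβc.mono (Icc_subset_Icc ht0.le le_rfl)).intervalIntegrable_of_Icc ht.2.le)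
      (fun s hs => hβpos s ⟨ht0.le.trans hs.1.le, hs.2.le⟩) hK
      (fun s hs => hMK ⟨(le_max_left _ _).trans_lt (ht.1.trans_le hs.1), hs.2⟩) hMbot
      (hineq.mono fun s hs hmem => hs ⟨ht0.trans hmem.1, hmem.2⟩)).trans_lt hKε
  convert hrate.inv₀ (by norm_num) using 1
  · ext t
    rw [inv_div, div_inv_eq_mul, mul_comm]
  · norm_num

/-- The deterministic core of the blow-up rate in Theorem 1.5: if
`|M' + (β/2)M²| ≤ β N` a.e. on `(0,T*)` with `M` locally Lipschitz,
`β : [0,T*] → (0,∞)` continuous, and `liminf_{t→T*} M(t) = -∞`, then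
`M(t) · ∫ₜ^{T*} β(s) ds → -2` as `t → T*⁻`. -/
theorem blow_up_rate
    (Tstar N : ℝ) (hT : 0 < Tstar) (hN : 0 < N)
    (β M : ℝ → ℝ)
    (hβc : ContinuousOn β (Set.Icc 0 Tstar))
    (hβpos : ∀ t ∈ Set.Icc (0 : ℝ) Tstar, 0 < β t)
    (hMlip : ∀ a b : ℝ, 0 ≤ a → b < Tstar →
      ∃ L : NNReal, LipschitzOnWith L M (Set.Icc a b))
    (hineq : ∀ᵐ (t : ℝ) ∂volume, t ∈ Set.Ioo 0 Tstar →
      DifferentiableAt ℝ M t ∧ |deriv M t + β t / 2 * (M t) ^ 2| ≤ β t * N)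
    (hblow : Filter.liminf (fun t => (M t : EReal))
      (nhdsWithin Tstar (Set.Iio Tstar)) = ⊥) :
    Tendsto (fun t => M t * ∫ s in t..Tstar, β s)
      (nhdsWithin Tstar (Set.Iio Tstar)) (nhds (-2)) :=
  blow_up_rate_general Tstar N hT β M hβc hβpos hMlip hineq hblow
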